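/- arXiv:1405.7746 — 5 statements merged into one kernel-verified Lean document; each statement's English description precedes it below -/
import Mathlib

section
/- Let g(z; λ, α) = α λ^{-α} z^{α-1} exp(-(z/λ)^α) be the Weibull density with parameters λ > 0, α > 0. Then for all y > 0, λ > 0, α > 0, θ ∈ (-s, s) with θ ≠ 0 and C(θ) ≠ 0, the EWPS density satisfies f(y; λ, α, θ) = Σ_{n=1}^∞ (a_n θ^n / C(θ)) · g(y; λ n^{-1/α}, α). -/
/-!
Multiplying the scale of a Weibull density by `n ^ (-1/α)` multiplies the density by
`n exp(-(n-1)(y/λ)^α)`. With `n = k + 1` this turns the `k`-th term of `C'(θ exp(-(y/λ)^α))`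
into the `k`-th Weibull term, so the identity holds term by term; pulling the common factor
`θ g / C(θ)` into the series finishes it.
-/

/-- Weibull density with scale `lam` and shape `α`. -/
noncomputable def weibullPdf (z lam α : ℝ) : ℝ :=
  α * lam ^ (-α) * z ^ (α - 1) * Real.exp (-(z / lam) ^ α)

theorem weibullPdf_mul_rpow_neg_inv {z lam α m : ℝ} (hz : 0 ≤ z) (hlam : 0 ≤ lam) (hα : α ≠ 0)
    (hm : 0 < m) :
    weibullPdf z (lam * m ^ (-(1 / α))) α =
      m * weibullPdf z lam α * Real.exp (-((m - 1) * (z / lam) ^ α)) := by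
  have hc : 0 ≤ m ^ (-(1 / α)) := Real.rpow_nonneg hm.le _
  have hscale : (lam * m ^ (-(1 / α))) ^ (-α) = lam ^ (-α) * m := by
    rw [Real.mul_rpow hlam hc, ← Real.rpow_mul hm.le, show -(1 / α) * -α = 1 by field_simp,
      Real.rpow_one]
  have hratio : (z / (lam * m ^ (-(1 / α)))) ^ α = m * (z / lam) ^ α := by
    rw [div_mul_eq_div_div, div_eq_mul_inv _ (m ^ _), ← Real.rpow_neg hm.le, neg_neg,
      Real.mul_rpow (div_nonneg hz hlam) (Real.rpow_nonneg hm.le _), ← Real.rpow_mul hm.le,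
      one_div_mul_cancel hα, Real.rpow_one, mul_comm]
  have hexp : Real.exp (-(m * (z / lam) ^ α)) =
      Real.exp (-(z / lam) ^ α) * Real.exp (-((m - 1) * (z / lam) ^ α)) := by
    rw [← Real.exp_add]
    ring_nf
  rw [weibullPdf, weibullPdf, hscale, hratio, hexp]
  ring

theorem weibullPdf_mul_natSucc_rpow {z lam α : ℝ} (hz : 0 ≤ z) (hlam : 0 ≤ lam) (hα : α ≠ 0)
    (n : ℕ) :
    weibullPdf z (lam * ((n : ℝ) + 1) ^ (-(1 / α))) α =
      ((n : ℝ) + 1) * weibullPdf z lam α * Real.exp (-(z / lam) ^ α) ^ n := by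
  rw [weibullPdf_mul_rpow_neg_inv hz hlam hα (by positivity), ← Real.exp_nat_mul]
  ring_nf

theorem stmt_3_general (a : ℕ → ℝ) (s : ℝ) :
    ∀ y lam α θ : ℝ, 0 < y → 0 < lam → 0 < α → |θ| < s → θ ≠ 0 →
      (∑' n : ℕ, a (n+1) * θ ^ (n+1)) ≠ 0 →
      θ * weibullPdf y lam α / (∑' n : ℕ, a (n+1) * θ ^ (n+1)) *
          (∑' n : ℕ, ((n : ℝ)+1) * a (n+1) * (θ * Real.exp (-(y / lam) ^ α)) ^ n) =
        ∑' n : ℕ, (a (n+1) * θ ^ (n+1) / (∑' k : ℕ, a (k+1) * θ ^ (k+1))) *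
          weibullPdf y (lam * ((n : ℝ)+1) ^ (-(1 / α))) α := by
  intro y lam α θ hy hlam hα _ _ _
  rw [← tsum_mul_left]
  refine tsum_congr fun n => ?_
  rw [weibullPdf_mul_natSucc_rpow hy.le hlam.le hα.ne', mul_pow, pow_succ]
  ring

/-- the EWPS density is an infinite linear combination of Weibull
densities: f(y;λ,α,θ) = Σ_{n≥1} (a_n θ^n / C(θ)) g(y; λ n^{-1/α}, α). -/
theorem stmt_3 (a : ℕ → ℝ) (s : ℝ) (hs : 0 < s)
    (ha : ∀ n, 1 ≤ n → 0 ≤ a n) (ha1 : 0 < a 1)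
    (hsum : ∀ x : ℝ, |x| < s → Summable (fun n : ℕ => a (n+1) * x ^ (n+1)))
    (hsum' : ∀ x : ℝ, |x| < s → Summable (fun n : ℕ => ((n : ℝ)+1) * a (n+1) * x ^ n)) :
    ∀ y lam α θ : ℝ, 0 < y → 0 < lam → 0 < α → |θ| < s → θ ≠ 0 →
      (∑' n : ℕ, a (n+1) * θ ^ (n+1)) ≠ 0 →
      θ * weibullPdf y lam α / (∑' n : ℕ, a (n+1) * θ ^ (n+1)) *
          (∑' n : ℕ, ((n : ℝ)+1) * a (n+1) * (θ * Real.exp (-(y / lam) ^ α)) ^ n) =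
        ∑' n : ℕ, (a (n+1) * θ ^ (n+1) / (∑' k : ℕ, a (k+1) * θ ^ (k+1))) *
          weibullPdf y (lam * ((n : ℝ)+1) ^ (-(1 / α))) α :=
  stmt_3_general a s
end

section
/- Let Y have density f(y; λ, α, θ) = (θ g(y; λ, α)/C(θ)) C'(θ e^{-(y/λ)^α}) on (0, ∞) with λ, α > 0, θ ∈ (-s, s), θ ≠ 0, C(θ) ≠ 0. Then for every r > 0, E(Y^r) = Γ(r/α + 1) λ^r · (1/C(θ)) · Σ_{n=1}^∞ a_n θ^n n^{-r/α}, and this series converges absolutely. -/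
/-- EWPS density. -/
noncomputable def ewpsPdf (a : ℕ → ℝ) (y lam α θ : ℝ) : ℝ :=
  θ * weibullPdf y lam α / (∑' n : ℕ, a (n+1) * θ ^ (n+1)) *
    (∑' n : ℕ, ((n : ℝ)+1) * a (n+1) * (θ * Real.exp (-(y / lam) ^ α)) ^ n)

open Real Set MeasureTheory

theorem integral_tsum_mul_of_nonneg {X ι : Type*} [MeasurableSpace X] [Countable ι]
    {μ : Measure X} {f : ι → X → ℝ} {w : ι → ℝ} (hf : ∀ i, Integrable (f i) μ)
    (hf0 : ∀ i, 0 ≤ᵐ[μ] f i) (hsum : Summable fun i => |w i| * ∫ x, f i x ∂μ) :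
    ∫ x, ∑' i, w i * f i x ∂μ = ∑' i, w i * ∫ x, f i x ∂μ := by
  have hnorm (i : ι) : ∫ x, ‖w i * f i x‖ ∂μ = |w i| * ∫ x, f i x ∂μ := by
    rw [← integral_const_mul]
    refine integral_congr_ae ((hf0 i).mono fun x hx => ?_)
    simp only [norm_mul, Real.norm_eq_abs, abs_of_nonneg hx]
  rw [← integral_tsum_of_summable_integral_norm (fun i => (hf i).const_mul (w i))
    (by simpa only [hnorm] using hsum)]
  simp only [integral_const_mul]

section Weibull

variable {lam α : ℝ}

theorem weibullPdf_nonneg (hlam : 0 ≤ lam) (hα : 0 ≤ α) {y : ℝ} (hy : 0 ≤ y) :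
    0 ≤ weibullPdf y lam α := by
  unfold weibullPdf; positivity

theorem weibullPdf_of_nonneg (hlam : 0 < lam) {y : ℝ} (hy : 0 ≤ y) :
    weibullPdf y lam α = α * lam ^ (-α) * y ^ (α - 1) * exp (-lam ^ (-α) * y ^ α) := by
  rw [weibullPdf, div_rpow hy hlam.le, rpow_neg hlam.le, div_eq_inv_mul, neg_mul]

theorem rpow_mul_weibullPdf_of_nonneg (hlam : 0 < lam) (r : ℝ) {y : ℝ} (hy : 0 < y) :
    y ^ r * weibullPdf y lam α =
      α * lam ^ (-α) * (y ^ (r + α - 1) * exp (-lam ^ (-α) * y ^ α)) := by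
  rw [weibullPdf_of_nonneg hlam hy.le, add_sub_assoc, rpow_add hy]
  ring

theorem integrableOn_rpow_mul_weibullPdf (hlam : 0 < lam) (hα : 0 < α) {r : ℝ}
    (hr : -α < r) : IntegrableOn (fun y => y ^ r * weibullPdf y lam α) (Ioi 0) :=
  IntegrableOn.congr_fun
    ((integrableOn_rpow_mul_exp_neg_mul_rpow (s := r + α - 1) (by linarith) hα
      (rpow_pos_of_pos hlam (-α))).const_mul (α * lam ^ (-α)))
    (fun _ hy => (rpow_mul_weibullPdf_of_nonneg hlam r hy).symm) measurableSet_Ioi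

theorem integral_rpow_mul_weibullPdf (hlam : 0 < lam) (hα : 0 < α) {r : ℝ} (hr : -α < r) :
    ∫ y in Ioi 0, y ^ r * weibullPdf y lam α = lam ^ r * Gamma (r / α + 1) := by
  rw [setIntegral_congr_fun measurableSet_Ioi fun y hy => rpow_mul_weibullPdf_of_nonneg hlam r hy,
    integral_const_mul, integral_rpow_mul_exp_neg_mul_rpow hα (by linarith)
      (rpow_pos_of_pos hlam (-α)), ← rpow_mul hlam.le]
  have hexp : -α * (-(r + α - 1 + 1) / α) = r + α := by field_simp; ring
  have hGamma : (r + α - 1 + 1) / α = r / α + 1 := by field_simp; ring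
  have hlam_pow : lam ^ (-α) * lam ^ (r + α) = lam ^ r := by
    rw [← rpow_add hlam]; ring_nf
  rw [hexp, hGamma, ← hlam_pow]
  field_simp

theorem weibullPdf_mul_rpow_neg_inv_s4 (hlam : 0 < lam) (hα : α ≠ 0) {c : ℝ} (hc : 0 < c)
    {y : ℝ} (hy : 0 ≤ y) :
    weibullPdf y (lam * c ^ (-α⁻¹)) α =
      c * weibullPdf y lam α * exp (-(c - 1) * (y / lam) ^ α) := by
  have hscale : (lam * c ^ (-α⁻¹)) ^ (-α) = c * lam ^ (-α) := by
    rw [mul_rpow hlam.le (rpow_nonneg hc.le _), ← rpow_mul hc.le, neg_mul_neg,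
      inv_mul_cancel₀ hα, rpow_one, mul_comm]
  have hdiv : (y / lam) ^ α = lam ^ (-α) * y ^ α := by
    rw [div_rpow hy hlam.le, rpow_neg hlam.le, div_eq_inv_mul]
  have hexp : exp (-(c * lam ^ (-α)) * y ^ α) =
      exp (-lam ^ (-α) * y ^ α) * exp (-(c - 1) * (lam ^ (-α) * y ^ α)) := by
    rw [← exp_add]; ring_nf
  rw [weibullPdf_of_nonneg (mul_pos hlam (rpow_pos_of_pos hc _)) hy, weibullPdf_of_nonneg hlam hy, hscale,
    hdiv, hexp]
  ring

theorem integral_rpow_mul_weibullPdf_mul_rpow_neg_inv (hlam : 0 < lam) (hα : 0 < α) {r : ℝ}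
    (hr : -α < r) {c : ℝ} (hc : 0 < c) :
    ∫ y in Ioi 0, y ^ r * weibullPdf y (lam * c ^ (-α⁻¹)) α =
      Gamma (r / α + 1) * lam ^ r * c ^ (-(r / α)) := by
  rw [integral_rpow_mul_weibullPdf (mul_pos hlam (rpow_pos_of_pos hc _)) hα hr,
    mul_rpow hlam.le (rpow_nonneg hc.le _), ← rpow_mul hc.le]
  ring_nf

end Weibull

theorem summable_abs_mul_add_one_rpow_neg {b : ℕ → ℝ} (hb : Summable fun n => |b n|) {t : ℝ}
    (ht : 0 ≤ t) : Summable fun n : ℕ => |b n * ((n : ℝ) + 1) ^ (-t)| := by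
  refine hb.of_nonneg_of_le (fun n => abs_nonneg _) fun n => ?_
  rw [abs_mul, abs_of_nonneg (rpow_nonneg n.cast_add_one_pos.le _)]
  exact mul_le_of_le_one_right (abs_nonneg _)
    (rpow_le_one_of_one_le_of_nonpos (by simp) (neg_nonpos.mpr ht))

theorem ewpsPdf_eq_tsum_weibullPdf (a : ℕ → ℝ) {lam α : ℝ} (hlam : 0 < lam) (hα : α ≠ 0)
    (θ : ℝ) {y : ℝ} (hy : 0 ≤ y) :
    ewpsPdf a y lam α θ = ∑' n : ℕ, a (n+1) * θ ^ (n+1) / (∑' n : ℕ, a (n+1) * θ ^ (n+1)) *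
      weibullPdf y (lam * ((n : ℝ) + 1) ^ (-α⁻¹)) α := by
  rw [ewpsPdf, ← tsum_mul_left]
  refine tsum_congr fun n => ?_
  rw [weibullPdf_mul_rpow_neg_inv_s4 hlam hα n.cast_add_one_pos hy, add_sub_cancel_right,
    neg_mul, ← mul_neg, exp_nat_mul, mul_pow, pow_succ]
  ring

theorem stmt_4_general (a : ℕ → ℝ) (s : ℝ)
    (ha : ∀ n, 1 ≤ n → 0 ≤ a n)
    (hsum : ∀ x : ℝ, |x| < s → Summable (fun n : ℕ => a (n+1) * x ^ (n+1)))
    (lam α θ r : ℝ) (hlam : 0 < lam) (hα : 0 < α) (hθs : |θ| < s)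
    (hr : 0 < r) :
    (∫ y in Set.Ioi (0 : ℝ), y ^ r * ewpsPdf a y lam α θ) =
        Real.Gamma (r / α + 1) * lam ^ r * (1 / ∑' n : ℕ, a (n+1) * θ ^ (n+1)) *
          ∑' n : ℕ, a (n+1) * θ ^ (n+1) * ((n : ℝ)+1) ^ (-(r / α)) ∧
      Summable (fun n : ℕ => |a (n+1) * θ ^ (n+1) * ((n : ℝ)+1) ^ (-(r / α))|) := by
  set C := ∑' n : ℕ, a (n+1) * θ ^ (n+1)
  set b : ℕ → ℝ := fun n => a (n+1) * θ ^ (n+1)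
  set lamₙ : ℕ → ℝ := fun n => lam * ((n : ℝ) + 1) ^ (-α⁻¹)
  have hlamₙ (n : ℕ) : 0 < lamₙ n := mul_pos hlam (rpow_pos_of_pos n.cast_add_one_pos _)
  have hmoment (n : ℕ) : ∫ y in Ioi 0, y ^ r * weibullPdf y (lamₙ n) α =
      Gamma (r / α + 1) * lam ^ r * ((n : ℝ) + 1) ^ (-(r / α)) :=
    integral_rpow_mul_weibullPdf_mul_rpow_neg_inv hlam hα (by linarith) n.cast_add_one_pos
  have hb : Summable fun n => |b n| := (hsum |θ| (by rwa [abs_abs])).congr fun n => by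
    rw [abs_mul, abs_pow, abs_of_nonneg (ha _ n.succ_pos)]
  have habs := summable_abs_mul_add_one_rpow_neg hb (div_pos hr hα).le
  refine ⟨?_, habs⟩
  calc ∫ y in Ioi 0, y ^ r * ewpsPdf a y lam α θ
      = ∫ y in Ioi 0, ∑' n, b n / C * (y ^ r * weibullPdf y (lamₙ n) α) :=
        setIntegral_congr_fun measurableSet_Ioi fun y hy => by
          rw [ewpsPdf_eq_tsum_weibullPdf a hlam hα.ne' θ (le_of_lt hy), ← tsum_mul_left]
          exact tsum_congr fun n => by ring
    _ = ∑' n, b n / C * ∫ y in Ioi 0, y ^ r * weibullPdf y (lamₙ n) α := by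
        refine integral_tsum_mul_of_nonneg
          (fun n => integrableOn_rpow_mul_weibullPdf (hlamₙ n) hα (by linarith))
          (fun n => (ae_restrict_mem measurableSet_Ioi).mono fun y hy =>
            mul_nonneg (rpow_nonneg (le_of_lt hy) _)
              (weibullPdf_nonneg (hlamₙ n).le hα.le (le_of_lt hy))) ?_
        refine (habs.mul_left (Gamma (r / α + 1) * lam ^ r / |C|)).congr fun n => ?_
        rw [hmoment, abs_div, abs_mul, abs_of_nonneg (rpow_nonneg n.cast_add_one_pos.le _)]
        ring
    _ = _ := by
        simp_rw [hmoment, ← tsum_mul_left]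
        exact tsum_congr fun n => by ring

/-- the r-th moment of an EWPS random variable is
Γ(r/α+1) λ^r C(θ)⁻¹ Σ_{n≥1} a_n θ^n n^{-r/α}, and the series converges absolutely. -/
theorem stmt_4 (a : ℕ → ℝ) (s : ℝ) (hs : 0 < s)
    (ha : ∀ n, 1 ≤ n → 0 ≤ a n) (ha1 : 0 < a 1)
    (hsum : ∀ x : ℝ, |x| < s → Summable (fun n : ℕ => a (n+1) * x ^ (n+1)))
    (lam α θ r : ℝ) (hlam : 0 < lam) (hα : 0 < α) (hθs : |θ| < s) (hθ : θ ≠ 0)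
    (hC : (∑' n : ℕ, a (n+1) * θ ^ (n+1)) ≠ 0) (hr : 0 < r) :
    (∫ y in Set.Ioi (0 : ℝ), y ^ r * ewpsPdf a y lam α θ) =
        Real.Gamma (r / α + 1) * lam ^ r * (1 / ∑' n : ℕ, a (n+1) * θ ^ (n+1)) *
          ∑' n : ℕ, a (n+1) * θ ^ (n+1) * ((n : ℝ)+1) ^ (-(r / α)) ∧
      Summable (fun n : ℕ => |a (n+1) * θ ^ (n+1) * ((n : ℝ)+1) ^ (-(r / α))|) :=
  stmt_4_general a s ha hsum lam α θ r hlam hα hθs hr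
end

section
/- Suppose the Weibull family is identifiable: if g(y; λ₁, α₁) = g(y; λ₂, α₂) for all y > 0, then λ₁ = λ₂ and α₁ = α₂. Let K = {n ∈ ℕ : a_n > 0}. If K contains both an even and an odd integer, then F(·; λ₁, α₁, θ₁) = F(·; λ₂, α₂, θ₂) (as functions on (0, ∞)) implies (λ₁, α₁, θ₁) = (λ₂, α₂, θ₂). In particular the EWPS family is identifiable whenever C is not an odd function. -/
/-- EWPS cdf F(y;λ,α,θ) = 1 - C(θ e^{-(y/λ)^α})/C(θ). -/
noncomputable def ewpsCdf (a : ℕ → ℝ) (y lam α θ : ℝ) : ℝ :=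
  1 - (∑' n : ℕ, a (n+1) * (θ * Real.exp (-(y / lam) ^ α)) ^ (n+1)) /
    (∑' n : ℕ, a (n+1) * θ ^ (n+1))

open Filter Topology Real FormalMultilinearSeries

namespace FormalMultilinearSeries

variable {𝕜 : Type*} [NontriviallyNormedField 𝕜] {c d : ℕ → 𝕜}

theorem le_radius_ofScalars_of_summable {x : 𝕜} (h : Summable fun n => c n * x ^ n) :
    (‖x‖₊ : ENNReal) ≤ (ofScalars 𝕜 c).radius := by
  refine (ofScalars 𝕜 c).le_radius_of_tendsto (l := 0) ?_
  simpa [norm_mul, norm_pow] using h.tendsto_atTop_zero.norm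

theorem tendsto_ofScalarsSum_zero [CompleteSpace 𝕜] (hc : 0 < (ofScalars 𝕜 c).radius) :
    Tendsto (ofScalarsSum (E := 𝕜) c) (𝓝 0) (𝓝 (c 0)) := by
  have h := ((ofScalars 𝕜 c).hasFPowerSeriesOnBall hc).continuousOn.continuousAt
    (Metric.eball_mem_nhds 0 hc) |>.tendsto
  rwa [← ofScalarsSum, ofScalarsSum_zero, smul_eq_mul, mul_one] at h

theorem ofScalars_eq_of_frequently_eq [CompleteSpace 𝕜] (hc : 0 < (ofScalars 𝕜 c).radius)
    (hd : 0 < (ofScalars 𝕜 d).radius)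
    (h : ∃ᶠ x in 𝓝[≠] 0, ofScalarsSum (E := 𝕜) c x = ofScalarsSum d x) : c = d := by
  have hpc := ((ofScalars 𝕜 c).hasFPowerSeriesOnBall hc).hasFPowerSeriesAt
  have hpd := ((ofScalars 𝕜 d).hasFPowerSeriesOnBall hd).hasFPowerSeriesAt
  exact ofScalars_series_injective 𝕜 𝕜 <| hpc.eq_formalMultilinearSeries_of_eventually hpd <|
    (hpc.analyticAt.frequently_eq_iff_eventually_eq hpd.analyticAt).mp h

end FormalMultilinearSeries

theorem tendsto_div_of_mul_eq_mul {α : Type*} {l : Filter α} {u v f g : α → ℝ} {A B : ℝ}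
    (hf : Tendsto f l (𝓝 A)) (hg : Tendsto g l (𝓝 B)) (hB : B ≠ 0)
    (hu : ∀ᶠ y in l, u y ≠ 0) (h : ∀ᶠ y in l, u y * f y = v y * g y) :
    Tendsto (fun y => v y / u y) l (𝓝 (A / B)) := by
  refine (hf.div hg hB).congr' ?_
  filter_upwards [hu, h, hg.eventually_ne hB] with y hu h hg
  rw [Pi.div_apply, div_eq_div_iff hg hu]
  linarith

theorem tendsto_mul_rpow_sub_mul_rpow_atTop {c₁ c₂ β₁ β₂ : ℝ} (hc₂ : 0 < c₂) (hβ₁ : 0 < β₁)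
    (h : β₁ < β₂ ∨ β₁ = β₂ ∧ c₁ < c₂) :
    Tendsto (fun y : ℝ => c₂ * y ^ β₂ - c₁ * y ^ β₁) atTop atTop := by
  rcases h with hβ | ⟨rfl, hc⟩
  · have hfac : Tendsto (fun y : ℝ => y ^ β₁ * (c₂ * y ^ (β₂ - β₁) - c₁)) atTop atTop :=
      (tendsto_rpow_atTop hβ₁).atTop_mul_atTop₀ <| tendsto_atTop_add_const_right _ _ <|
        (tendsto_rpow_atTop (sub_pos.2 hβ)).const_mul_atTop hc₂
    refine hfac.congr' ?_
    filter_upwards [eventually_gt_atTop 0] with y hy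
    rw [mul_sub, mul_left_comm, ← rpow_add hy, add_sub_cancel, mul_comm (y ^ β₁)]
  · simpa only [sub_mul] using (tendsto_rpow_atTop hβ₁).const_mul_atTop (sub_pos.2 hc)

theorem eq_of_tendsto_mul_rpow_sub_mul_rpow {c₁ c₂ β₁ β₂ L : ℝ} (hc₁ : 0 < c₁) (hc₂ : 0 < c₂)
    (hβ₁ : 0 < β₁) (hβ₂ : 0 < β₂)
    (h : Tendsto (fun y : ℝ => c₂ * y ^ β₂ - c₁ * y ^ β₁) atTop (𝓝 L)) :
    β₁ = β₂ ∧ c₁ = c₂ := by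
  have h' : Tendsto (fun y : ℝ => c₁ * y ^ β₁ - c₂ * y ^ β₂) atTop (𝓝 (-L)) := by
    simpa only [neg_sub] using h.neg
  have h₁₂ := fun hlt => not_tendsto_nhds_of_tendsto_atTop
    (tendsto_mul_rpow_sub_mul_rpow_atTop hc₂ hβ₁ hlt) _ h
  have h₂₁ := fun hlt => not_tendsto_nhds_of_tendsto_atTop
    (tendsto_mul_rpow_sub_mul_rpow_atTop hc₁ hβ₂ hlt) _ h'
  have hβ : β₁ = β₂ := le_antisymm (not_lt.1 fun hlt => h₂₁ (.inl hlt))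
    (not_lt.1 fun hlt => h₁₂ (.inl hlt))
  exact ⟨hβ, le_antisymm (not_lt.1 fun hlt => h₂₁ (.inr ⟨hβ.symm, hlt⟩))
    (not_lt.1 fun hlt => h₁₂ (.inr ⟨hβ, hlt⟩))⟩

theorem eq_of_tendsto_div_rpow_sub_div_rpow {l₁ α₁ l₂ α₂ L : ℝ} (hl₁ : 0 < l₁) (hα₁ : 0 < α₁)
    (hl₂ : 0 < l₂) (hα₂ : 0 < α₂)
    (h : Tendsto (fun y : ℝ => (y / l₁) ^ α₁ - (y / l₂) ^ α₂) atTop (𝓝 L)) :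
    l₁ = l₂ ∧ α₁ = α₂ := by
  have hc : Tendsto (fun y : ℝ => (l₁ ^ α₁)⁻¹ * y ^ α₁ - (l₂ ^ α₂)⁻¹ * y ^ α₂) atTop (𝓝 L) := by
    refine h.congr' ?_
    filter_upwards [eventually_ge_atTop 0] with y hy
    rw [div_rpow hy hl₁.le, div_rpow hy hl₂.le, div_eq_inv_mul, div_eq_inv_mul]
  obtain ⟨rfl, hl⟩ :=
    eq_of_tendsto_mul_rpow_sub_mul_rpow (by positivity) (by positivity) hα₂ hα₁ hc
  exact ⟨rpow_left_injOn hα₂.ne' hl₁.le hl₂.le (inv_injective hl).symm, rfl⟩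

theorem eq_one_of_pow_eq_pow_of_odd_add {R : Type*} [Field R] [LinearOrder R]
    [IsStrictOrderedRing R] {z : R} {n m : ℕ} (hz : z ≠ 0) (h : z ^ n = z ^ m)
    (hnm : Odd (n + m)) : z = 1 := by
  wlog hle : n ≤ m generalizing n m
  · exact this h.symm (by rwa [add_comm]) (le_of_not_ge hle)
  obtain ⟨k, rfl⟩ := Nat.exists_eq_add_of_le hle
  have hk : z ^ k = 1 := by
    rwa [pow_add, left_eq_mul₀ (pow_ne_zero n hz)] at h
  have hk_odd : Odd k := by
    rw [Nat.odd_iff] at hnm ⊢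
    omega
  rcases pow_eq_one_iff_cases.1 hk with rfl | h1 | ⟨-, hk_even⟩
  · simp at hk_odd
  · exact h1
  · exact absurd hk_even (Nat.not_even_iff_odd.2 hk_odd)

noncomputable def ewpsC (a : ℕ → ℝ) (x : ℝ) : ℝ :=
  ∑' n : ℕ, a (n+1) * x ^ (n+1)

noncomputable def weibullSurv (l α y : ℝ) : ℝ :=
  exp (-(y / l) ^ α)

theorem ewpsCdf_eq (a : ℕ → ℝ) (y l α θ : ℝ) :
    ewpsCdf a y l α θ = 1 - ewpsC a (θ * weibullSurv l α y) / ewpsC a θ :=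
  rfl

theorem weibullSurv_pos (l α y : ℝ) : 0 < weibullSurv l α y :=
  exp_pos _

theorem tendsto_weibullSurv_atTop {l α : ℝ} (hl : 0 < l) (hα : 0 < α) :
    Tendsto (weibullSurv l α) atTop (𝓝[>] 0) :=
  tendsto_exp_atBot_nhdsGT.comp <| tendsto_neg_atTop_atBot.comp <|
    (tendsto_rpow_atTop hα).comp (tendsto_id.atTop_div_const hl)

/-- The coefficients of the power series `t ↦ C(θ t) K / t`. -/
def scaledCoeff (a : ℕ → ℝ) (θ K : ℝ) (k : ℕ) : ℝ :=
  a (k+1) * θ ^ (k+1) * K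

theorem ewpsC_mul_mul (a : ℕ → ℝ) (θ t K : ℝ) :
    ewpsC a (θ * t) * K = t * ofScalarsSum (E := ℝ) (scaledCoeff a θ K) t := by
  rw [ewpsC, ofScalars_sum_eq, ← tsum_mul_left, ← tsum_mul_right]
  exact tsum_congr fun n => by rw [scaledCoeff, smul_eq_mul]; ring

section Ewps

variable {a : ℕ → ℝ} {θ θ₁ θ₂ : ℝ}

theorem radius_scaledCoeff_pos (hθ : Summable fun n => a (n+1) * θ ^ (n+1)) (K : ℝ) :
    0 < (ofScalars ℝ (scaledCoeff a θ K)).radius :=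
  one_pos.trans_le <| by
    simpa using le_radius_ofScalars_of_summable (x := (1 : ℝ)) (by
      simpa [scaledCoeff, mul_comm] using hθ.mul_right K)

theorem mul_ofScalarsSum_eq_of_ewpsCdf_eq {y l₁ α₁ l₂ α₂ : ℝ} (hC₁ : ewpsC a θ₁ ≠ 0)
    (hC₂ : ewpsC a θ₂ ≠ 0) (h : ewpsCdf a y l₁ α₁ θ₁ = ewpsCdf a y l₂ α₂ θ₂) :
    weibullSurv l₁ α₁ y *
        ofScalarsSum (E := ℝ) (scaledCoeff a θ₁ (ewpsC a θ₂)) (weibullSurv l₁ α₁ y) =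
      weibullSurv l₂ α₂ y *
        ofScalarsSum (E := ℝ) (scaledCoeff a θ₂ (ewpsC a θ₁)) (weibullSurv l₂ α₂ y) := by
  rw [ewpsCdf_eq, ewpsCdf_eq, sub_right_inj, div_eq_div_iff hC₁ hC₂] at h
  rwa [ewpsC_mul_mul, ewpsC_mul_mul] at h

theorem scale_shape_eq_of_ewpsCdf_eq {l₁ α₁ l₂ α₂ : ℝ} (ha1 : a 1 ≠ 0) (hθ₁ : θ₁ ≠ 0)
    (hθ₂ : θ₂ ≠ 0) (hs₁ : Summable fun n => a (n+1) * θ₁ ^ (n+1))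
    (hs₂ : Summable fun n => a (n+1) * θ₂ ^ (n+1)) (hC₁ : ewpsC a θ₁ ≠ 0)
    (hC₂ : ewpsC a θ₂ ≠ 0) (hl₁ : 0 < l₁) (hα₁ : 0 < α₁) (hl₂ : 0 < l₂) (hα₂ : 0 < α₂)
    (hF : ∀ y, 0 < y → ewpsCdf a y l₁ α₁ θ₁ = ewpsCdf a y l₂ α₂ θ₂) :
    l₁ = l₂ ∧ α₁ = α₂ := by
  have hu₁ := (tendsto_weibullSurv_atTop hl₁ hα₁).mono_right nhdsWithin_le_nhds
  have hu₂ := (tendsto_weibullSurv_atTop hl₂ hα₂).mono_right nhdsWithin_le_nhds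
  have hc₁ : scaledCoeff a θ₁ (ewpsC a θ₂) 0 ≠ 0 := by simp [scaledCoeff, *]
  have hc₂ : scaledCoeff a θ₂ (ewpsC a θ₁) 0 ≠ 0 := by simp [scaledCoeff, *]
  have hratio := tendsto_div_of_mul_eq_mul
    ((tendsto_ofScalarsSum_zero (radius_scaledCoeff_pos hs₁ _)).comp hu₁)
    ((tendsto_ofScalarsSum_zero (radius_scaledCoeff_pos hs₂ _)).comp hu₂) hc₂
    (Eventually.of_forall fun y => (weibullSurv_pos _ _ y).ne')
    ((eventually_gt_atTop 0).mono fun y hy =>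
      mul_ofScalarsSum_eq_of_ewpsCdf_eq hC₁ hC₂ (hF y hy))
  refine eq_of_tendsto_div_rpow_sub_div_rpow hl₁ hα₁ hl₂ hα₂
    (((continuousAt_log (div_ne_zero hc₁ hc₂)).tendsto.comp hratio).congr fun y => ?_)
  simp only [Function.comp_apply, weibullSurv, ← exp_sub, log_exp]
  ring

theorem pow_div_eq_of_ewpsCdf_eq {l α : ℝ} (hθ₂ : θ₂ ≠ 0)
    (hs₁ : Summable fun n => a (n+1) * θ₁ ^ (n+1))
    (hs₂ : Summable fun n => a (n+1) * θ₂ ^ (n+1)) (hC₁ : ewpsC a θ₁ ≠ 0)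
    (hC₂ : ewpsC a θ₂ ≠ 0) (hl : 0 < l) (hα : 0 < α)
    (hF : ∀ y, 0 < y → ewpsCdf a y l α θ₁ = ewpsCdf a y l α θ₂) {k : ℕ} (hk : 1 ≤ k)
    (hak : a k ≠ 0) : (θ₁ / θ₂) ^ k = ewpsC a θ₁ / ewpsC a θ₂ := by
  have hc : scaledCoeff a θ₁ (ewpsC a θ₂) = scaledCoeff a θ₂ (ewpsC a θ₁) := by
    refine ofScalars_eq_of_frequently_eq (radius_scaledCoeff_pos hs₁ _)
      (radius_scaledCoeff_pos hs₂ _) <| ((tendsto_weibullSurv_atTop hl hα).mono_right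
        (nhdsGT_le_nhdsNE 0)).frequently (Eventually.frequently ?_)
    filter_upwards [eventually_gt_atTop 0] with y hy
    exact mul_left_cancel₀ (weibullSurv_pos l α y).ne'
      (mul_ofScalarsSum_eq_of_ewpsCdf_eq hC₁ hC₂ (hF y hy))
  obtain ⟨j, rfl⟩ := Nat.exists_eq_add_of_le' hk
  have h : θ₁ ^ (j+1) * ewpsC a θ₂ = θ₂ ^ (j+1) * ewpsC a θ₁ :=
    mul_left_cancel₀ hak (by simpa only [scaledCoeff, mul_assoc] using congrFun hc j)
  rw [div_pow, div_eq_div_iff (pow_ne_zero _ hθ₂) hC₂]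
  linear_combination h

end Ewps

theorem stmt_7_general (a : ℕ → ℝ) (s : ℝ) (ha1 : 0 < a 1)
    (hsum : ∀ x : ℝ, |x| < s → Summable (fun n : ℕ => a (n+1) * x ^ (n+1)))
    (hK : ∃ n m : ℕ, 1 ≤ n ∧ 1 ≤ m ∧ 0 < a n ∧ 0 < a m ∧ Even n ∧ Odd m)
    (lam₁ α₁ θ₁ lam₂ α₂ θ₂ : ℝ)
    (hlam₁ : 0 < lam₁) (hα₁ : 0 < α₁) (hθ₁ : θ₁ ≠ 0) (hθ₁s : |θ₁| < s)
    (hlam₂ : 0 < lam₂) (hα₂ : 0 < α₂) (hθ₂ : θ₂ ≠ 0) (hθ₂s : |θ₂| < s)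
    (hC₁ : (∑' n : ℕ, a (n+1) * θ₁ ^ (n+1)) ≠ 0)
    (hC₂ : (∑' n : ℕ, a (n+1) * θ₂ ^ (n+1)) ≠ 0)
    (hF : ∀ y : ℝ, 0 < y → ewpsCdf a y lam₁ α₁ θ₁ = ewpsCdf a y lam₂ α₂ θ₂) :
    lam₁ = lam₂ ∧ α₁ = α₂ ∧ θ₁ = θ₂ := by
  obtain ⟨n, m, hn1, hm1, han, ham, hn, hm⟩ := hK
  have hs₁ := hsum θ₁ hθ₁s
  have hs₂ := hsum θ₂ hθ₂s
  obtain ⟨rfl, rfl⟩ := scale_shape_eq_of_ewpsCdf_eq ha1.ne' hθ₁ hθ₂ hs₁ hs₂ hC₁ hC₂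
    hlam₁ hα₁ hlam₂ hα₂ hF
  have hpow := fun k hk (hak : 0 < a k) =>
    pow_div_eq_of_ewpsCdf_eq hθ₂ hs₁ hs₂ hC₁ hC₂ hlam₁ hα₁ hF hk hak.ne'
  refine ⟨rfl, rfl, (div_eq_one_iff_eq hθ₂).1 ?_⟩
  exact eq_one_of_pow_eq_pow_of_odd_add (div_ne_zero hθ₁ hθ₂)
    ((hpow n hn1 han).trans (hpow m hm1 ham).symm) (hn.add_odd hm)

/-- identifiability of the EWPS family when the Weibull family is
identifiable and K = {n : a_n > 0} contains both an even and an odd integer. -/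
theorem stmt_7 (a : ℕ → ℝ) (s : ℝ) (hs : 0 < s)
    (ha : ∀ n, 1 ≤ n → 0 ≤ a n) (ha1 : 0 < a 1)
    (hsum : ∀ x : ℝ, |x| < s → Summable (fun n : ℕ => a (n+1) * x ^ (n+1)))
    (hWid : ∀ l₁ α₁ l₂ α₂ : ℝ, 0 < l₁ → 0 < α₁ → 0 < l₂ → 0 < α₂ →
      (∀ y : ℝ, 0 < y → weibullPdf y l₁ α₁ = weibullPdf y l₂ α₂) → l₁ = l₂ ∧ α₁ = α₂)
    (hK : ∃ n m : ℕ, 1 ≤ n ∧ 1 ≤ m ∧ 0 < a n ∧ 0 < a m ∧ Even n ∧ Odd m)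
    (lam₁ α₁ θ₁ lam₂ α₂ θ₂ : ℝ)
    (hlam₁ : 0 < lam₁) (hα₁ : 0 < α₁) (hθ₁ : θ₁ ≠ 0) (hθ₁s : |θ₁| < s)
    (hlam₂ : 0 < lam₂) (hα₂ : 0 < α₂) (hθ₂ : θ₂ ≠ 0) (hθ₂s : |θ₂| < s)
    (hC₁ : (∑' n : ℕ, a (n+1) * θ₁ ^ (n+1)) ≠ 0)
    (hC₂ : (∑' n : ℕ, a (n+1) * θ₂ ^ (n+1)) ≠ 0)
    (hF : ∀ y : ℝ, 0 < y → ewpsCdf a y lam₁ α₁ θ₁ = ewpsCdf a y lam₂ α₂ θ₂) :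
    lam₁ = lam₂ ∧ α₁ = α₂ ∧ θ₁ = θ₂ :=
  stmt_7_general a s ha1 hsum hK lam₁ α₁ θ₁ lam₂ α₂ θ₂ hlam₁ hα₁ hθ₁ hθ₁s hlam₂ hα₂ hθ₂ hθ₂s hC₁ hC₂
    hF
end

section
/- Fix λ, α > 0 and 0 < θ₁ < θ₂ < s. Then for all y > 0, the survival functions satisfy C(θ₂ e^{-(y/λ)^α})/C(θ₂) ≤ C(θ₁ e^{-(y/λ)^α})/C(θ₁); i.e., the EWPS distributions are stochastically ordered: Y_{θ₂} ≤_st Y_{θ₁}. -/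
/-!
With weights `w n = a (n+1) θ₁^(n+1)`, `f n = (θ₂/θ₁)^(n+1)` and `g n = b^(n+1)`, where
`b = exp (-(y/λ)^α) ≤ 1`, the cross-multiplied claim `C(θ₂ b) C(θ₁) ≤ C(θ₁ b) C(θ₂)` reads
`(∑ w f g)(∑ w) ≤ (∑ w f)(∑ w g)`. Since `f` is increasing and `g` decreasing, this is the weighted
Chebyshev sum inequality: on partial sums it follows from
`∑ᵢ ∑ⱼ wᵢ wⱼ (fᵢ - fⱼ)(gᵢ - gⱼ) ≤ 0`, and it passes to the limit.
-/

open Finset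

theorem AntivaryOn.sum_mul_mul_mul_sum_le_sum_mul_mul_sum {ι : Type*} {s : Finset ι}
    {w f g : ι → ℝ} (hw : ∀ i ∈ s, 0 ≤ w i) (hfg : AntivaryOn f g s) :
    (∑ i ∈ s, w i * f i * g i) * ∑ i ∈ s, w i ≤
      (∑ i ∈ s, w i * f i) * ∑ i ∈ s, w i * g i := by
  have hdouble : 0 ≤ ∑ i ∈ s, ∑ j ∈ s, w i * w j * -((f j - f i) * (g j - g i)) :=
    sum_nonneg fun i hi => sum_nonneg fun j hj =>
      mul_nonneg (mul_nonneg (hw i hi) (hw j hj)) (neg_nonneg.2 (hfg.sub_mul_sub_nonpos hi hj))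
  have hexpand : ∑ i ∈ s, ∑ j ∈ s, w i * w j * -((f j - f i) * (g j - g i)) =
      2 * ((∑ i ∈ s, w i * f i) * ∑ i ∈ s, w i * g i -
        (∑ i ∈ s, w i * f i * g i) * ∑ i ∈ s, w i) := by
    calc _ = ∑ i ∈ s, ∑ j ∈ s, (w i * f i * (w j * g j) - w i * f i * g i * w j
          - w i * (w j * f j * g j) + w i * g i * (w j * f j)) :=
          sum_congr rfl fun i _ => sum_congr rfl fun j _ => by ring
      _ = (∑ i ∈ s, w i * f i) * (∑ j ∈ s, w j * g j)
          - (∑ i ∈ s, w i * f i * g i) * ∑ j ∈ s, w j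
          - (∑ i ∈ s, w i) * (∑ j ∈ s, w j * f j * g j)
          + (∑ i ∈ s, w i * g i) * ∑ j ∈ s, w j * f j := by
          simp only [sum_mul_sum, ← sum_sub_distrib, ← sum_add_distrib]
      _ = _ := by ring
  linarith

theorem Antivary.tsum_mul_mul_mul_tsum_le_tsum_mul_mul_tsum {w f g : ℕ → ℝ}
    (hw : ∀ n, 0 ≤ w n) (hfg : Antivary f g) (hw_sum : Summable w)
    (hwf : Summable fun n => w n * f n) (hwg : Summable fun n => w n * g n)
    (hwfg : Summable fun n => w n * f n * g n) :
    (∑' n, w n * f n * g n) * ∑' n, w n ≤ (∑' n, w n * f n) * ∑' n, w n * g n :=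
  le_of_tendsto_of_tendsto' (hwfg.tendsto_sum_tsum_nat.mul hw_sum.tendsto_sum_tsum_nat)
    (hwf.tendsto_sum_tsum_nat.mul hwg.tendsto_sum_tsum_nat)
    fun _ => AntivaryOn.sum_mul_mul_mul_sum_le_sum_mul_mul_sum (fun n _ => hw n)
      (hfg.antivaryOn _)

variable {c : ℕ → ℝ}

theorem tsum_mul_pow_succ_pos (hc : ∀ n, 0 ≤ c n) (hc0 : 0 < c 0) {x : ℝ} (hx : 0 < x)
    (hsum : Summable fun n => c n * x ^ (n + 1)) : 0 < ∑' n, c n * x ^ (n + 1) :=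
  hsum.tsum_pos (fun n => mul_nonneg (hc n) (by positivity)) 0 (by positivity)

theorem tsum_mul_pow_succ_mul_tsum_le_of_le (hc : ∀ n, 0 ≤ c n) {x z b : ℝ}
    (hx : 0 < x) (hxz : x ≤ z) (hb0 : 0 ≤ b) (hb1 : b ≤ 1)
    (hsx : Summable fun n => c n * x ^ (n + 1)) (hsz : Summable fun n => c n * z ^ (n + 1))
    (hsxb : Summable fun n => c n * (x * b) ^ (n + 1))
    (hszb : Summable fun n => c n * (z * b) ^ (n + 1)) :
    (∑' n, c n * (z * b) ^ (n + 1)) * ∑' n, c n * x ^ (n + 1) ≤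
      (∑' n, c n * (x * b) ^ (n + 1)) * ∑' n, c n * z ^ (n + 1) := by
  set w : ℕ → ℝ := fun n => c n * x ^ (n + 1)
  set f : ℕ → ℝ := fun n => (z / x) ^ (n + 1)
  set g : ℕ → ℝ := fun n => b ^ (n + 1)
  have hf : Monotone f := fun m n hmn =>
    pow_le_pow_right₀ ((one_le_div hx).2 hxz) (Nat.succ_le_succ hmn)
  have hg : Antitone g := fun m n hmn => pow_le_pow_of_le_one hb0 hb1 (Nat.succ_le_succ hmn)
  have hwf : (fun n => w n * f n) = fun n => c n * z ^ (n + 1) := by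
    funext n; simp only [w, f, div_pow]; field_simp
  have hwg : (fun n => w n * g n) = fun n => c n * (x * b) ^ (n + 1) := by
    funext n; simp only [w, g, mul_pow]; ring
  have hwfg : (fun n => w n * f n * g n) = fun n => c n * (z * b) ^ (n + 1) := by
    funext n; simp only [w, f, g, div_pow, mul_pow]; field_simp
  have := (hf.antivary hg).tsum_mul_mul_mul_tsum_le_tsum_mul_mul_tsum
    (fun n => mul_nonneg (hc n) (by positivity)) hsx (hwf ▸ hsz) (hwg ▸ hsxb) (hwfg ▸ hszb)
  rw [hwf, hwg, hwfg] at this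
  exact this.trans_eq (mul_comm _ _)

theorem stmt_16_general (a : ℕ → ℝ) (s : ℝ)
    (ha : ∀ n, 1 ≤ n → 0 ≤ a n) (ha1 : 0 < a 1)
    (hsum : ∀ x : ℝ, |x| < s → Summable (fun n : ℕ => a (n+1) * x ^ (n+1)))
    (lam α θ₁ θ₂ : ℝ) (hlam : 0 < lam)
    (hθ₁ : 0 < θ₁) (h12 : θ₁ < θ₂) (hθ₂s : θ₂ < s) :
    ∀ y : ℝ, 0 < y →
      (∑' n : ℕ, a (n+1) * (θ₂ * Real.exp (-(y / lam) ^ α)) ^ (n+1)) /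
          (∑' n : ℕ, a (n+1) * θ₂ ^ (n+1)) ≤
        (∑' n : ℕ, a (n+1) * (θ₁ * Real.exp (-(y / lam) ^ α)) ^ (n+1)) /
          (∑' n : ℕ, a (n+1) * θ₁ ^ (n+1)) := by
  intro y hy
  set b := Real.exp (-(y / lam) ^ α)
  have hb0 : 0 < b := Real.exp_pos _
  have hb1 : b ≤ 1 :=
    Real.exp_le_one_iff.2 (neg_nonpos.2 (Real.rpow_nonneg (div_pos hy hlam).le α))
  have hc : ∀ n, 0 ≤ a (n + 1) := fun n => ha (n + 1) n.succ_pos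
  have hsum' : ∀ x, 0 < x → x ≤ θ₂ → Summable fun n => a (n + 1) * x ^ (n + 1) :=
    fun x hx hxθ => hsum x ((abs_of_pos hx).trans_lt (hxθ.trans_lt hθ₂s))
  have hθ₂ : 0 < θ₂ := hθ₁.trans h12
  rw [div_le_div_iff₀ (tsum_mul_pow_succ_pos hc ha1 hθ₂ (hsum' θ₂ hθ₂ le_rfl))
    (tsum_mul_pow_succ_pos hc ha1 hθ₁ (hsum' θ₁ hθ₁ h12.le))]
  exact tsum_mul_pow_succ_mul_tsum_le_of_le hc hθ₁ h12.le hb0.le hb1 (hsum' θ₁ hθ₁ h12.le)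
    (hsum' θ₂ hθ₂ le_rfl) (hsum' _ (by positivity) (by nlinarith))
    (hsum' _ (by positivity) (by nlinarith))

/-- for 0 < θ₁ < θ₂ < s and all y > 0, the EWPS survival functions
satisfy C(θ₂ e^{-(y/λ)^α})/C(θ₂) ≤ C(θ₁ e^{-(y/λ)^α})/C(θ₁), i.e. Y_{θ₂} ≤_st Y_{θ₁}. -/
theorem stmt_16 (a : ℕ → ℝ) (s : ℝ) (hs : 0 < s)
    (ha : ∀ n, 1 ≤ n → 0 ≤ a n) (ha1 : 0 < a 1)
    (hsum : ∀ x : ℝ, |x| < s → Summable (fun n : ℕ => a (n+1) * x ^ (n+1)))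
    (lam α θ₁ θ₂ : ℝ) (hlam : 0 < lam) (hα : 0 < α)
    (hθ₁ : 0 < θ₁) (h12 : θ₁ < θ₂) (hθ₂s : θ₂ < s) :
    ∀ y : ℝ, 0 < y →
      (∑' n : ℕ, a (n+1) * (θ₂ * Real.exp (-(y / lam) ^ α)) ^ (n+1)) /
          (∑' n : ℕ, a (n+1) * θ₂ ^ (n+1)) ≤
        (∑' n : ℕ, a (n+1) * (θ₁ * Real.exp (-(y / lam) ^ α)) ^ (n+1)) /
          (∑' n : ℕ, a (n+1) * θ₁ ^ (n+1)) :=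
  stmt_16_general a s ha ha1 hsum lam α θ₁ θ₂ hlam hθ₁ h12 hθ₂s
end

section
/- For each fixed b ∈ (0, 1), the function θ ↦ C(θb)/C(θ) is nonincreasing on (0, s), where C(θ) = Σ_{n=1}^∞ a_n θ^n with a_n ≥ 0, a_1 > 0 and radius of convergence s. -/
/-!
Clearing denominators, the claim is `C(yb) C(x) ≤ C(xb) C(y)` for `0 < x ≤ y < s`.
Expanding both products as double series, the difference pairs the `(m, n)` and `(n, m)`
terms into `a_m a_n (b^m - b^n) (x^m y^n - y^m x^n)`, and both factors have the same sign
as `n - m` because `b < 1 ≤ y / x`.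
-/

lemma pow_sub_pow_mul_pow_mul_pow_sub_nonneg {x y b : ℝ} (hx : 0 ≤ x) (hxy : x ≤ y)
    (hb : 0 ≤ b) (hb1 : b ≤ 1) (m n : ℕ) :
    0 ≤ (b ^ m - b ^ n) * (x ^ m * y ^ n - y ^ m * x ^ n) := by
  wlog hmn : m ≤ n generalizing m n
  · have := this n m (le_of_not_ge hmn)
    linarith
  obtain ⟨k, rfl⟩ := Nat.exists_eq_add_of_le hmn
  have hb_pow : b ^ (m + k) ≤ b ^ m := pow_le_pow_of_le_one hb hb1 (Nat.le_add_right m k)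
  have hxy_pow : x ^ k ≤ y ^ k := pow_le_pow_left₀ hx hxy k
  have hfactor : x ^ m * y ^ (m + k) - y ^ m * x ^ (m + k) = x ^ m * y ^ m * (y ^ k - x ^ k) := by
    ring
  rw [hfactor]
  exact mul_nonneg (sub_nonneg.2 hb_pow)
    (mul_nonneg (mul_nonneg (pow_nonneg hx m) (pow_nonneg (hx.trans hxy) m)) (sub_nonneg.2 hxy_pow))

lemma tsum_nonneg_of_add_swap_nonneg {α : Type*} {D : α × α → ℝ} (hD : Summable D)
    (h : ∀ p, 0 ≤ D p + D p.swap) : 0 ≤ ∑' p, D p := by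
  have hswap : ∑' p : α × α, D p.swap = ∑' p, D p := (Equiv.prodComm α α).tsum_eq D
  have hD_swap : Summable fun p : α × α => D p.swap := (Equiv.prodComm α α).summable_iff.mpr hD
  have hsum_nonneg : 0 ≤ ∑' p, (D p + D p.swap) := tsum_nonneg h
  rw [hD.tsum_add hD_swap, hswap] at hsum_nonneg
  linarith

lemma tsum_mul_pow_mul_le {ι : Type*} {c : ι → ℝ} (e : ι → ℕ) (hc : ∀ i, 0 ≤ c i)
    {x y b : ℝ} (hx : 0 ≤ x) (hxy : x ≤ y) (hb : 0 ≤ b) (hb1 : b ≤ 1)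
    (hy : Summable fun i => c i * y ^ e i) :
    (∑' i, c i * (y * b) ^ e i) * ∑' i, c i * x ^ e i ≤
      (∑' i, c i * (x * b) ^ e i) * ∑' i, c i * y ^ e i := by
  set F : ℝ → ι → ℝ := fun u i => c i * u ^ e i
  have hy0 : 0 ≤ y := hx.trans hxy
  have hF_nonneg : ∀ u, 0 ≤ u → 0 ≤ F u := fun u hu i => mul_nonneg (hc i) (pow_nonneg hu _)
  have hF_summable : ∀ u, 0 ≤ u → u ≤ y → Summable (F u) := fun u hu huy =>
    hy.of_nonneg_of_le (hF_nonneg u hu) fun i =>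
      mul_le_mul_of_nonneg_left (pow_le_pow_left₀ hu huy _) (hc i)
  have hyb : y * b ≤ y := mul_le_of_le_one_right hy0 hb1
  have hxb : x * b ≤ y := (mul_le_of_le_one_right hx hb1).trans hxy
  have hprod : ∀ u v, 0 ≤ u → u ≤ y → 0 ≤ v → v ≤ y →
      Summable (fun p : ι × ι => F u p.1 * F v p.2) ∧
        (∑' i, F u i) * ∑' j, F v j = ∑' p : ι × ι, F u p.1 * F v p.2 := by
    intro u v hu huy hv hvy
    have hsum := (hF_summable u hu huy).mul_of_nonneg (hF_summable v hv hvy)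
      (hF_nonneg u hu) (hF_nonneg v hv)
    exact ⟨hsum, (hF_summable u hu huy).tsum_mul_tsum (hF_summable v hv hvy) hsum⟩
  have hpair : ∀ p : ι × ι, 0 ≤ (F (x * b) p.1 * F y p.2 - F (y * b) p.1 * F x p.2) +
      (F (x * b) p.2 * F y p.1 - F (y * b) p.2 * F x p.1) := by
    rintro ⟨i, j⟩
    have hpair_eq : (F (x * b) i * F y j - F (y * b) i * F x j) +
        (F (x * b) j * F y i - F (y * b) j * F x i) =
        c i * c j * ((b ^ e i - b ^ e j) * (x ^ e i * y ^ e j - y ^ e i * x ^ e j)) := by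
      simp only [F, mul_pow]
      ring
    rw [hpair_eq]
    exact mul_nonneg (mul_nonneg (hc i) (hc j))
      (pow_sub_pow_mul_pow_mul_pow_sub_nonneg hx hxy hb hb1 _ _)
  obtain ⟨hsum_xb, hprod_xb⟩ := hprod (x * b) y (mul_nonneg hx hb) hxb hy0 le_rfl
  obtain ⟨hsum_yb, hprod_yb⟩ := hprod (y * b) x (mul_nonneg hy0 hb) hyb hx hxy
  change (∑' i, F (y * b) i) * ∑' i, F x i ≤ (∑' i, F (x * b) i) * ∑' i, F y i
  rw [hprod_xb, hprod_yb, ← sub_nonneg, ← hsum_xb.tsum_sub hsum_yb]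
  exact tsum_nonneg_of_add_swap_nonneg (hsum_xb.sub hsum_yb) hpair

theorem stmt_17_general (a : ℕ → ℝ) (s : ℝ)
    (ha : ∀ n, 1 ≤ n → 0 ≤ a n) (ha1 : 0 < a 1)
    (hsum : ∀ x : ℝ, |x| < s → Summable (fun n : ℕ => a (n+1) * x ^ (n+1))) :
    ∀ b : ℝ, 0 < b → b < 1 →
      AntitoneOn
        (fun θ : ℝ => (∑' n : ℕ, a (n+1) * (θ * b) ^ (n+1)) /
          (∑' n : ℕ, a (n+1) * θ ^ (n+1)))
        (Set.Ioo 0 s) := by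
  intro b hb hb1 x ⟨hx, hxs⟩ y ⟨hy, hys⟩ hxy
  have hC_pos : ∀ θ, 0 < θ → θ < s → 0 < ∑' n : ℕ, a (n+1) * θ ^ (n+1) :=
    fun θ hθ hθs => (hsum θ (by rwa [abs_of_pos hθ])).tsum_pos
      (fun n => mul_nonneg (ha (n+1) (Nat.le_add_left 1 n)) (pow_nonneg hθ.le _)) 0
      (by simpa using mul_pos ha1 hθ)
  rw [div_le_div_iff₀ (hC_pos y hy hys) (hC_pos x hx hxs)]
  exact tsum_mul_pow_mul_le (fun n => n + 1) (fun n => ha (n+1) (Nat.le_add_left 1 n))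
    hx.le hxy hb.le hb1.le (hsum y (by rwa [abs_of_pos hy]))

/-- for each fixed b ∈ (0,1), θ ↦ C(θb)/C(θ) is nonincreasing on (0,s). -/
theorem stmt_17 (a : ℕ → ℝ) (s : ℝ) (hs : 0 < s)
    (ha : ∀ n, 1 ≤ n → 0 ≤ a n) (ha1 : 0 < a 1)
    (hsum : ∀ x : ℝ, |x| < s → Summable (fun n : ℕ => a (n+1) * x ^ (n+1))) :
    ∀ b : ℝ, 0 < b → b < 1 →
      AntitoneOn
        (fun θ : ℝ => (∑' n : ℕ, a (n+1) * (θ * b) ^ (n+1)) /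
          (∑' n : ℕ, a (n+1) * θ ^ (n+1)))
        (Set.Ioo 0 s) :=
  stmt_17_general a s ha ha1 hsum
end
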